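/- In a spatial congestion game with 3 or more resources, the finite improvement property can fail: there exists an undirected graph, an initial coloring, and non-increasing payoff functions satisfying the chain g_r(2) > g_b(2) > g_r(3) > g_r(4) > g_p(5) > g_b(4) > g_r(5) > g_r(6) > g_b(6) > g_b(7) > g_p(6) > g_r(7) > g_b(10) > g_r(8) > g_r(11) > g_p(8) > g_b(11), such that there is a cyclic sequence of strict improvement steps returning to the initial profile. -/
import Mathlib


open scoped Classical

/-- Number of neighbors of `i` in `G` choosing resource `r` under profile `σ`. -/
noncomputable def cnt {ι R : Type*} [Fintype ι]
    (G : SimpleGraph ι) (σ : ι → R) (i : ι) (r : R) : ℕ :=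
  (Finset.univ.filter (fun j => G.Adj i j ∧ σ j = r)).card

/-- A strict improvement step (non-user-specific payoffs). -/
def Improves {ι R : Type*} [Fintype ι]
    (G : SimpleGraph ι) (g : R → ℕ → ℤ) (σ σ' : ι → R) : Prop :=
  ∃ i : ι, (∀ j, j ≠ i → σ' j = σ j) ∧
    g (σ i) (cnt G σ i (σ i) + 1) < g (σ' i) (cnt G σ' i (σ' i) + 1)

/-- payoff functions -/
def gg : Fin 3 → ℕ → ℤ
  | 0, n =>
    if n ≤ 2 then 17 else if n = 3 then 15 else if n = 4 then 14 else
    if n = 5 then 11 else if n = 6 then 10 else if n = 7 then 6 else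
    if n ≤ 10 then 4 else 3
  | 1, n => if n ≤ 5 then 13 else if n ≤ 7 then 7 else 2
  | 2, n =>
    if n ≤ 2 then 16 else if n ≤ 4 then 12 else if n ≤ 6 then 9 else
    if n ≤ 9 then 8 else if n = 10 then 5 else 1

/-- base relation for the graph on 52 nodes: 0=A,1=B,2=C,3=D, pendants 4..51 -/
def grel (a b : Fin 52) : Prop :=
  (a.val = 0 ∧ b.val = 2) ∨ (a.val = 1 ∧ b.val = 2) ∨ (a.val = 2 ∧ b.val = 3) ∨
  (a.val = 0 ∧ 4 ≤ b.val ∧ b.val ≤ 18) ∨ (a.val = 1 ∧ 19 ≤ b.val ∧ b.val ≤ 27) ∨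
  (a.val = 2 ∧ 28 ≤ b.val ∧ b.val ≤ 48) ∨ (a.val = 3 ∧ 49 ≤ b.val)

instance : DecidableRel grel := fun a b => by unfold grel; infer_instance

def GG : SimpleGraph (Fin 52) := SimpleGraph.fromRel grel

instance : DecidableRel GG.Adj := fun a b => by
  rw [GG, SimpleGraph.fromRel_adj]; infer_instance

/-- coloring with focal nodes A,B,C colored a,b,c; D fixed blue; pendants fixed. -/
def base (a b c : Fin 3) : Fin 52 → Fin 3 := fun j =>
  if j.val = 0 then a else if j.val = 1 then b else if j.val = 2 then c else
  if j.val = 3 then 2 else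
  if j.val ≤ 8 then 0 else if j.val ≤ 13 then 1 else if j.val ≤ 18 then 2 else
  if j.val ≤ 21 then 0 else if j.val ≤ 24 then 1 else if j.val ≤ 27 then 2 else
  if j.val ≤ 34 then 0 else if j.val ≤ 41 then 1 else if j.val ≤ 48 then 2 else
  if j.val = 49 then 0 else if j.val = 50 then 1 else 2

def st : ℕ → Fin 52 → Fin 3 := fun t =>
  match t with
  | 0 => base 1 2 0
  | 1 => base 1 2 2
  | 2 => base 2 2 2
  | 3 => base 2 2 1
  | 4 => base 0 2 1
  | 5 => base 0 0 1
  | 6 => base 0 0 0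
  | _ => base 1 0 0

lemma cnt_eq (σ : Fin 52 → Fin 3) (i : Fin 52) (r : Fin 3) :
    cnt GG σ i r = (Finset.univ.filter (fun j => GG.Adj i j ∧ σ j = r)).card := by
  unfold cnt
  exact congrArg Finset.card (Finset.filter_congr_decidable _ _ _)

set_option maxHeartbeats 1000000 in
/-- With 3 resources (`r, p, b` encoded as `0, 1, 2`) the finite improvement property can
fail: there exist an undirected graph, non-increasing payoff functions satisfying the chain
`g_r(2) > g_b(2) > g_r(3) > g_r(4) > g_p(5) > g_b(4) > g_r(5) > g_r(6) > g_b(6) > g_b(7) >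
g_p(6) > g_r(7) > g_b(10) > g_r(8) > g_r(11) > g_p(8) > g_b(11)`, and a cyclic sequence of
strict improvement steps returning to the initial profile. -/
theorem fip_fails_three_resources :
    ∃ (n : ℕ) (G : SimpleGraph (Fin n)) (g : Fin 3 → ℕ → ℤ),
      (∀ x, Antitone (g x)) ∧
      (g 0 2 > g 2 2 ∧ g 2 2 > g 0 3 ∧ g 0 3 > g 0 4 ∧ g 0 4 > g 1 5 ∧
       g 1 5 > g 2 4 ∧ g 2 4 > g 0 5 ∧ g 0 5 > g 0 6 ∧ g 0 6 > g 2 6 ∧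
       g 2 6 > g 2 7 ∧ g 2 7 > g 1 6 ∧ g 1 6 > g 0 7 ∧ g 0 7 > g 2 10 ∧
       g 2 10 > g 0 8 ∧ g 0 8 > g 0 11 ∧ g 0 11 > g 1 8 ∧ g 1 8 > g 2 11) ∧
      ∃ (T : ℕ) (f : ℕ → Fin n → Fin 3), 0 < T ∧ f 0 = f T ∧
        ∀ t < T, Improves G g (f t) (f (t + 1)) := by
  refine ⟨52, GG, gg, ?_, by decide, 8, fun t => st (t % 8), by norm_num, rfl, ?_⟩
  · intro x
    apply antitone_nat_of_succ_le
    intro n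
    fin_cases x <;> simp only [gg] <;> split_ifs <;> omega
  · intro t ht
    interval_cases t <;> unfold Improves
    · exact ⟨2, by decide, by rw [cnt_eq, cnt_eq]; decide⟩
    · exact ⟨0, by decide, by rw [cnt_eq, cnt_eq]; decide⟩
    · exact ⟨2, by decide, by rw [cnt_eq, cnt_eq]; decide⟩
    · exact ⟨0, by decide, by rw [cnt_eq, cnt_eq]; decide⟩
    · exact ⟨1, by decide, by rw [cnt_eq, cnt_eq]; decide⟩
    · exact ⟨2, by decide, by rw [cnt_eq, cnt_eq]; decide⟩
    · exact ⟨0, by decide, by rw [cnt_eq, cnt_eq]; decide⟩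
    · exact ⟨1, by decide, by rw [cnt_eq, cnt_eq]; decide⟩
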